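/- arXiv:1802.01908 — 4 statements merged into one kernel-verified Lean document; each statement's English description precedes it below -/
import Mathlib

section
/- Every proper Cantor graph of vertex degree bound d admits a continuous proper vertex coloring with d+1 colors: there is a partition of the Cantor set into d+1 clopen sets A₁,…,A_{d+1} such that whenever (x,y) ∈ E with x ≠ y, x and y do not lie in the same A_i. -/
/-- The Cantor set `{0,1}^ℕ`. -/
abbrev Cantor : Type := ℕ → Bool

/-- The edge relation of a Cantor graph (edges between distinct points). -/
def edgeRel (E : Set (Cantor × Cantor)) (x y : Cantor) : Prop := (x, y) ∈ E ∧ x ≠ y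

/-- `within E r x y` means the shortest-path distance `d_E(x,y)` is at most `r`. -/
def within (E : Set (Cantor × Cantor)) : ℕ → Cantor → Cantor → Prop
  | 0, x, y => x = y
  | r + 1, x, y => within E r x y ∨ ∃ z, within E r x z ∧ edgeRel E z y

/-- A Cantor graph: a closed symmetric subset of `𝒞 × 𝒞`, where a loop at `x`
forces `x` to be an isolated vertex. -/
def IsCantorGraph (E : Set (Cantor × Cantor)) : Prop :=
  IsClosed E ∧ (∀ x y : Cantor, (x, y) ∈ E → (y, x) ∈ E) ∧
    (∀ x y : Cantor, (x, x) ∈ E → (x, y) ∈ E → y = x)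

/-- Vertex degree bound `d`. -/
def DegreeBound (E : Set (Cantor × Cantor)) (d : ℕ) : Prop :=
  ∀ x : Cantor, {y | edgeRel E x y}.ncard ≤ d

/-- Properness: for every `r` there is `s` such that points at positive
distance at most `r` differ within their first `s` coordinates. -/
def IsProperCantorGraph (E : Set (Cantor × Cantor)) : Prop :=
  IsCantorGraph E ∧ ∀ r : ℕ, ∃ s : ℕ, 0 < s ∧
    ∀ x y : Cantor, within E r x y → x ≠ y → ∃ i < s, x i ≠ y i




namespace CGCAux

noncomputable section

/-- Truncation of a Cantor point to its first `t` coordinates. -/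
def trunc (t : ℕ) (x : Cantor) : Cantor := fun i => if i < t then x i else false

lemma trunc_eq_iff {t : ℕ} {x y : Cantor} :
    trunc t x = trunc t y ↔ ∀ i < t, x i = y i := by
  constructor
  · intro h i hi
    have := congrFun h i
    simpa [trunc, hi] using this
  · intro h
    funext i
    by_cases hi : i < t
    · simp [trunc, hi, h i hi]
    · simp [trunc, hi]

lemma trunc_trunc {a b : ℕ} (h : a ≤ b) (x : Cantor) :
    trunc a (trunc b x) = trunc a x := by
  apply trunc_eq_iff.mpr
  intro i hi
  simp [trunc, lt_of_lt_of_le hi h]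

lemma trunc_apply_of_lt {t i : ℕ} (hi : i < t) (x : Cantor) : trunc t x i = x i := by
  simp [trunc, hi]

/-- Extension of a finite word to a Cantor point (by `false`s). -/
def ext (t : ℕ) (w : Fin t → Bool) : Cantor := fun i => if h : i < t then w ⟨i, h⟩ else false

/-- Projection to the first `t` coordinates. -/
def projF (t : ℕ) (x : Cantor) : Fin t → Bool := fun i => x i

lemma ext_projF (t : ℕ) (x : Cantor) : ext t (projF t x) = trunc t x := by
  funext i
  by_cases h : i < t <;> simp [ext, projF, trunc, h]

lemma continuous_projF (t : ℕ) : Continuous (projF t) :=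
  continuous_pi fun i => continuous_apply (i : ℕ)

/-- Pick the least color of `Fin (d+1)` avoiding `D`. -/
def pick (d : ℕ) (D : Finset (Fin (d + 1))) : Fin (d + 1) :=
  if h : Dᶜ.Nonempty then Dᶜ.min' h else 0

lemma pick_not_mem {d : ℕ} {D : Finset (Fin (d + 1))} (hD : D.card ≤ d) :
    pick d D ∉ D := by
  have h1 : 0 < Dᶜ.card := by
    rw [Finset.card_compl]
    have : Fintype.card (Fin (d + 1)) = d + 1 := Fintype.card_fin _
    omega
  have h : Dᶜ.Nonempty := Finset.card_pos.mp h1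
  have := Dᶜ.min'_mem h
  rw [pick, dif_pos h]
  exact Finset.mem_compl.mp this

/-- The greedy coloring at the level of classes. -/
def greedy (d : ℕ) (T : ℕ → ℕ) (SS : ℕ → Cantor → Finset Cantor) (κ : Cantor → ℕ) :
    ℕ → Cantor → Fin (d + 1)
  | k, x =>
    pick d ((((SS k (trunc (T (k + 1)) x)).filter (fun y => κ y < k)).attach).image
      (fun y => greedy d T SS κ (κ y.1) y.1))
  termination_by k _ => k
  decreasing_by
    exact (Finset.mem_filter.mp y.2).2

lemma greedy_local {d : ℕ} {T : ℕ → ℕ} {SS : ℕ → Cantor → Finset Cantor} {κ : Cantor → ℕ}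
    {k : ℕ} {x x' : Cantor} (h : trunc (T (k + 1)) x = trunc (T (k + 1)) x') :
    greedy d T SS κ k x = greedy d T SS κ k x' := by
  rw [greedy, greedy, h]

lemma greedy_avoid {d : ℕ} {T : ℕ → ℕ} {SS : ℕ → Cantor → Finset Cantor} {κ : Cantor → ℕ}
    {k : ℕ} {x y : Cantor}
    (hcard : (SS k (trunc (T (k + 1)) x)).card ≤ d)
    (hy : y ∈ SS k (trunc (T (k + 1)) x)) (hk : κ y < k) :
    greedy d T SS κ k x ≠ greedy d T SS κ (κ y) y := by
  intro hEq
  rw [greedy] at hEq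
  set D := ((((SS k (trunc (T (k + 1)) x)).filter (fun y => κ y < k)).attach).image
      (fun y => greedy d T SS κ (κ y.1) y.1)) with hDdef
  have hDcard : D.card ≤ d := by
    calc D.card ≤ (((SS k (trunc (T (k + 1)) x)).filter (fun y => κ y < k)).attach).card :=
          Finset.card_image_le
    _ = ((SS k (trunc (T (k + 1)) x)).filter (fun y => κ y < k)).card := Finset.card_attach
    _ ≤ (SS k (trunc (T (k + 1)) x)).card := Finset.card_filter_le _ _
    _ ≤ d := hcard
  apply pick_not_mem hDcard
  rw [hEq]
  apply Finset.mem_image.mpr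
  exact ⟨⟨y, Finset.mem_filter.mpr ⟨hy, hk⟩⟩, Finset.mem_attach _ _, rfl⟩

end

end CGCAux


open CGCAux

/-- Every proper Cantor graph of vertex degree bound `d` admits a continuous
(clopen) proper vertex coloring with `d + 1` colors. -/
theorem proper_cantor_graph_clopen_coloring (d : ℕ) (E : Set (Cantor × Cantor))
    (hproper : IsProperCantorGraph E) (hdeg : DegreeBound E d) :
    ∃ A : Fin (d + 1) → Set Cantor,
      (∀ i, IsClopen (A i)) ∧
      (⋃ i, A i) = Set.univ ∧
      (Pairwise (Function.onFun Disjoint A)) ∧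
      (∀ (i : Fin (d + 1)) (x y : Cantor), edgeRel E x y → x ∈ A i → y ∉ A i) := by
  classical
  obtain ⟨⟨hEclosed, hEsymm, -⟩, hprop⟩ := hproper
  obtain ⟨s, hs0, hsep⟩ := hprop 2
  have hedgeSymm : ∀ x y : Cantor, edgeRel E x y → edgeRel E y x :=
    fun x y h => ⟨hEsymm _ _ h.1, h.2.symm⟩
  -- separation of edges within the first `s` coordinates
  have hedge_sep : ∀ x y : Cantor, edgeRel E x y → ∃ i < s, x i ≠ y i := by
    intro x y h
    have h2 : within E 2 x y := by
      simp only [within]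
      exact Or.inl (Or.inr ⟨x, rfl, h⟩)
    exact hsep x y h2 h.2
  -- separation of distinct neighbors of a common vertex
  have hnbr_sep : ∀ x y y' : Cantor, edgeRel E x y → edgeRel E x y' → y ≠ y' →
      ∃ i < s, y i ≠ y' i := by
    intro x y y' h1 h2 hne
    have h3 : within E 2 y y' := by
      simp only [within]
      exact Or.inr ⟨x, Or.inr ⟨y, rfl, hedgeSymm _ _ h1⟩, h2⟩
    exact hsep y y' h3 hne
  -- neighborhoods are finite of cardinality at most `d`
  set Nset : Cantor → Set Cantor := fun x => {y | edgeRel E x y} with hNset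
  have hNfin : ∀ x, (Nset x).Finite := by
    intro x
    apply Set.Finite.of_finite_image (f := projF s) (Set.toFinite _)
    intro y hy y' hy' hproj
    by_contra hne
    obtain ⟨i, hi, hne2⟩ := hnbr_sep x y y' hy hy' hne
    exact hne2 (congrFun hproj ⟨i, hi⟩)
  set Pset : ℕ → Cantor → Set Cantor := fun t' x => trunc t' '' Nset x with hPset
  have hPfin : ∀ t' x, (Pset t' x).Finite := fun t' x => (hNfin x).image _
  have hPcard : ∀ t' x, (Pset t' x).ncard ≤ d :=
    fun t' x => le_trans (Set.ncard_image_le (hNfin x)) (hdeg x)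
  -- every open set contains a cylinder around each of its points
  have cyl_sub : ∀ (U : Set Cantor) (x : Cantor), IsOpen U → x ∈ U →
      ∃ t : ℕ, ∀ x' : Cantor, (∀ i < t, x' i = x i) → x' ∈ U := by
    intro U x hU hx
    obtain ⟨I, u, hIu, hsub⟩ := isOpen_pi_iff.mp hU x hx
    refine ⟨I.sup id + 1, fun x' hx' => hsub ?_⟩
    intro i hi
    have hxi : x' i = x i := hx' i (Nat.lt_succ_of_le (Finset.le_sup (f := id) hi))
    rw [hxi]
    exact (hIu i hi).2
  -- upper semicontinuity of the truncated neighborhood sets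
  have usc : ∀ (t' : ℕ) (x : Cantor), ∃ t : ℕ, ∀ x' : Cantor,
      (∀ i < t, x' i = x i) → Pset t' x' ⊆ Pset t' x := by
    intro t' x
    set C1 : Set (Cantor × Cantor) :=
      (fun p : Cantor × Cantor => (fun i : Fin s => (p.1 i, p.2 i))) ⁻¹'
        {g : Fin s → Bool × Bool | ∃ i, (g i).1 ≠ (g i).2} with hC1
    set C2 : Set (Cantor × Cantor) :=
      (fun p : Cantor × Cantor => projF t' p.2) ⁻¹'
        {w : Fin t' → Bool | ext t' w ∉ Pset t' x} with hC2
    have hC1clopen : IsClopen C1 := by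
      apply (isClopen_discrete _).preimage
      exact continuous_pi fun i => (((continuous_apply (i : ℕ)).comp continuous_fst).prodMk
        ((continuous_apply (i : ℕ)).comp continuous_snd))
    have hC2clopen : IsClopen C2 :=
      (isClopen_discrete _).preimage ((continuous_projF t').comp continuous_snd)
    have hQclosed : IsClosed (E ∩ C1 ∩ C2) :=
      (hEclosed.inter hC1clopen.isClosed).inter hC2clopen.isClosed
    set K : Set Cantor := Prod.fst '' (E ∩ C1 ∩ C2) with hK
    have hKclosed : IsClosed K := (hQclosed.isCompact.image continuous_fst).isClosed
    have hxK : x ∉ K := by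
      rintro ⟨p, ⟨⟨hpE, hpC1⟩, hpC2⟩, hpx⟩
      have hpC1' : ∃ i : Fin s, p.1 (i : ℕ) ≠ p.2 (i : ℕ) := hpC1
      obtain ⟨i, hi⟩ := hpC1'
      have hne : p.1 ≠ p.2 := by
        intro hEq
        exact hi (by rw [hEq])
      have hedge : edgeRel E p.1 p.2 := ⟨by rw [Prod.mk.eta]; exact hpE, hne⟩
      have hmem : trunc t' p.2 ∈ Pset t' x := by
        rw [hpx] at hedge
        exact ⟨p.2, hedge, rfl⟩
      rw [hC2] at hpC2
      simp only [Set.mem_preimage, Set.mem_setOf_eq, ext_projF] at hpC2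
      exact hpC2 hmem
    obtain ⟨t, ht⟩ := cyl_sub Kᶜ x hKclosed.isOpen_compl hxK
    refine ⟨t, fun x' hx' v hv => ?_⟩
    obtain ⟨y, hyN, rfl⟩ := hv
    by_contra hnot
    have hyE : edgeRel E x' y := hyN
    have hQ : (x', y) ∈ E ∩ C1 ∩ C2 := by
      refine ⟨⟨hyE.1, ?_⟩, ?_⟩
      · obtain ⟨i, hi, hne⟩ := hedge_sep x' y hyE
        exact ⟨⟨i, hi⟩, hne⟩
      · rw [hC2]
        simp only [Set.mem_preimage, Set.mem_setOf_eq, ext_projF]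
        exact hnot
    exact (ht x' hx') ⟨(x', y), hQ, rfl⟩
  -- the key uniform lemma
  have KL : ∀ t' : ℕ, ∃ t : ℕ, t' ≤ t ∧ ∀ x₀ : Cantor, ∃ S : Finset Cantor,
      S.card ≤ d ∧ ∀ x y : Cantor, trunc t x = trunc t x₀ → edgeRel E x y →
        trunc t' y ∈ S := by
    intro t'
    choose tOf htOf using usc t'
    set U : Cantor → Set Cantor := fun z => {x' | ∀ i < tOf z, x' i = z i} with hU
    have hUopen : ∀ z, IsOpen (U z) := by
      intro z
      have hUz : U z = projF (tOf z) ⁻¹' {projF (tOf z) z} := by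
        ext x'
        simp only [hU, Set.mem_setOf_eq, Set.mem_preimage, Set.mem_singleton_iff]
        constructor
        · intro h; funext i; exact h i i.2
        · intro h i hi; exact congrFun h ⟨i, hi⟩
      rw [hUz]
      exact ((isClopen_discrete _).preimage (continuous_projF _)).isOpen
    obtain ⟨F, hF⟩ := isCompact_univ.elim_finite_subcover U hUopen
      (fun x _ => Set.mem_iUnion.mpr ⟨x, fun i _ => rfl⟩)
    refine ⟨max t' (F.sup tOf), le_max_left _ _, fun x₀ => ?_⟩
    obtain ⟨z, hzF, hz⟩ : ∃ z ∈ F, x₀ ∈ U z := by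
      have := hF (Set.mem_univ x₀)
      simpa using this
    refine ⟨(hPfin t' z).toFinset, ?_, ?_⟩
    · rw [← Set.ncard_eq_toFinset_card _ (hPfin t' z)]
      exact hPcard t' z
    · intro x y hxtr hxy
      have hxz : ∀ i < tOf z, x i = z i := by
        intro i hi
        have h1 : i < max t' (F.sup tOf) :=
          lt_of_lt_of_le hi (le_trans (Finset.le_sup hzF) (le_max_right _ _))
        rw [trunc_eq_iff.mp hxtr i h1]
        exact hz i hi
      exact (hPfin t' z).mem_toFinset.mpr ((htOf z x hxz) ⟨y, hxy, rfl⟩)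
  -- the class function
  set N := Fintype.card (Fin s → Bool) with hN
  set e : (Fin s → Bool) ≃ Fin N := Fintype.equivFin _ with he
  set κ : Cantor → ℕ := fun x => (e (projF s x) : ℕ) with hκ
  have hκlt : ∀ x, κ x < N := fun x => (e (projF s x)).2
  have hκ_eq : ∀ x y : Cantor, κ x = κ y → ∀ i < s, x i = y i := by
    intro x y h i hi
    have hp : projF s x = projF s y := e.injective (Fin.val_injective h)
    exact congrFun hp ⟨i, hi⟩
  have hκ_trunc : ∀ (t : ℕ), s ≤ t → ∀ x, κ (trunc t x) = κ x := by
    intro t hst x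
    have hp : projF s (trunc t x) = projF s x := by
      funext i
      exact trunc_apply_of_lt (lt_of_lt_of_le i.2 hst) x
    simp only [hκ, hp]
  have hκne : ∀ x y, edgeRel E x y → κ x ≠ κ y := by
    intro x y h hEq
    obtain ⟨i, hi, hne⟩ := hedge_sep x y h
    exact hne (hκ_eq x y hEq i hi)
  -- the tower of levels
  set T : ℕ → ℕ := fun k => Nat.rec s (fun _ tk => (KL tk).choose) k with hT
  have hTsucc : ∀ k, T (k + 1) = (KL (T k)).choose := fun _ => rfl
  have hTle : ∀ k, T k ≤ T (k + 1) := by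
    intro k
    rw [hTsucc]
    exact (KL (T k)).choose_spec.1
  have hTmono : Monotone T := monotone_nat_of_le_succ hTle
  have hsT : ∀ k, s ≤ T k := fun k => hTmono (Nat.zero_le k)
  -- the chosen neighbor-truncation sets
  set SS : ℕ → Cantor → Finset Cantor :=
    fun k x₀ => ((KL (T k)).choose_spec.2 x₀).choose with hSS
  have hSScard : ∀ k x₀, (SS k x₀).card ≤ d :=
    fun k x₀ => (((KL (T k)).choose_spec.2 x₀).choose_spec).1
  have hSSmem : ∀ k x₀ x y, trunc (T (k + 1)) x = trunc (T (k + 1)) x₀ →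
      edgeRel E x y → trunc (T k) y ∈ SS k x₀ := by
    intro k x₀ x y h1 h2
    rw [hTsucc] at h1
    exact (((KL (T k)).choose_spec.2 x₀).choose_spec).2 x y h1 h2
  -- the coloring
  set col : Cantor → Fin (d + 1) := fun x => greedy d T SS κ (κ x) x with hcol
  have main : ∀ x y : Cantor, edgeRel E x y → κ y < κ x → col x ≠ col y := by
    intro x y hxy hlt
    have hy' : trunc (T (κ x)) y ∈ SS (κ x) (trunc (T (κ x + 1)) x) :=
      hSSmem (κ x) (trunc (T (κ x + 1)) x) x y (trunc_trunc (le_refl _) x).symm hxy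
    have hκy' : κ (trunc (T (κ x)) y) = κ y := hκ_trunc _ (hsT _) y
    have h1 : greedy d T SS κ (κ x) x ≠
        greedy d T SS κ (κ (trunc (T (κ x)) y)) (trunc (T (κ x)) y) :=
      greedy_avoid (hSScard _ _) hy' (by rw [hκy']; exact hlt)
    have h2 : greedy d T SS κ (κ y) (trunc (T (κ x)) y) = greedy d T SS κ (κ y) y :=
      greedy_local (trunc_trunc (hTmono hlt) y)
    intro hc
    apply h1
    rw [hκy', h2]
    simp only [hcol] at hc
    exact hc
  have hcolH : ∀ x, col x = col (trunc (T N) x) := by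
    intro x
    have hκt : κ (trunc (T N) x) = κ x := hκ_trunc _ (hsT N) x
    simp only [hcol, hκt]
    exact greedy_local (trunc_trunc (hTmono (hκlt x)) x).symm
  refine ⟨fun i => {x | col x = i}, ?_, ?_, ?_, ?_⟩
  · intro i
    show IsClopen {x | col x = i}
    have hAi : {x | col x = i} =
        projF (T N) ⁻¹' ((fun w => col (ext (T N) w)) ⁻¹' {i}) := by
      ext x
      simp only [Set.mem_setOf_eq, Set.mem_preimage, Set.mem_singleton_iff, ext_projF]
      rw [← hcolH x]
    rw [hAi]
    exact (isClopen_discrete _).preimage (continuous_projF _)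
  · ext x
    simp only [Set.mem_iUnion, Set.mem_setOf_eq, Set.mem_univ, iff_true]
    exact ⟨col x, rfl⟩
  · intro i j hij
    apply Set.disjoint_left.mpr
    intro x hxi hxj
    simp only [Set.mem_setOf_eq] at hxi hxj
    exact hij (hxi ▸ hxj ▸ rfl)
  · intro i x y hxy hx hy
    simp only [Set.mem_setOf_eq] at hx hy
    have hne := hκne x y hxy
    rcases Nat.lt_or_ge (κ y) (κ x) with h | h
    · exact main x y hxy h (hx.trans hy.symm)
    · have hlt : κ x < κ y := lt_of_le_of_ne h hne
      exact main y x (hedgeSymm x y hxy) hlt (hy.trans hx.symm)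
end

section
/- The class of finite trees with vertex degree bound 3 is not almost finite: there exists ε > 0 such that for every K there is a finite tree T of degree bound 3 for which every partition of V(T) into parts of diameter at most K contains a part L with i_T(L) > ε. -/
/-- The inner vertex boundary of a set `H` in the graph `G`. -/
def gbdry {V : Type*} (G : SimpleGraph V) (H : Set V) : Set V :=
  {x ∈ H | ∃ y, y ∉ H ∧ G.Adj x y}

/-!
Take the complete binary tree of depth `K + 1`. In a partition into parts of diameter at most `K`,
the part `L` of the root contains only vertices of depth at most `K`, each of which has two
children. The children of the interior vertices of `L` are distinct vertices of `L` other than the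
root, so `2 |L \ ∂L| < |L|`, that is `|∂L| > |L| / 2`.
-/

open SimpleGraph

namespace SimpleGraph

variable {V ι : Type*} (G : SimpleGraph V)

theorem card_mul_ncard_sdiff_gbdry_lt [Finite ι] {L : Set V} (hL : L.Finite) {r : V} (hr : r ∈ L)
    (child : V → ι → V) (hinj : Set.InjOn (Function.uncurry child) (L ×ˢ Set.univ))
    (hne : ∀ x ∈ L, ∀ i, child x i ≠ r) (hadj : ∀ x ∈ L, ∀ i, G.Adj x (child x i)) :
    Nat.card ι * (L \ gbdry G L).ncard < L.ncard := by
  have hmaps : ∀ p ∈ (L \ gbdry G L) ×ˢ (Set.univ : Set ι),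
      Function.uncurry child p ∈ L \ {r} := by
    rintro ⟨x, i⟩ ⟨⟨hxL, hxB⟩, -⟩
    refine ⟨by_contra fun hout => hxB ⟨hxL, _, hout, hadj x hxL i⟩, hne x hxL i⟩
  calc Nat.card ι * (L \ gbdry G L).ncard
      = ((L \ gbdry G L) ×ˢ (Set.univ : Set ι)).ncard := by
        rw [Set.ncard_prod, Set.ncard_univ, mul_comm]
    _ ≤ (L \ {r}).ncard :=
        Set.ncard_le_ncard_of_injOn _ hmaps
          (hinj.mono (Set.prod_mono Set.sdiff_subset le_rfl)) hL.sdiff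
    _ < L.ncard := Set.ncard_sdiff_singleton_lt_of_mem hr hL

theorem ncard_lt_two_mul_ncard_gbdry {L : Set V} (hL : L.Finite) {r : V} (hr : r ∈ L)
    (child : V → Bool → V) (hinj : Set.InjOn (Function.uncurry child) (L ×ˢ Set.univ))
    (hne : ∀ x ∈ L, ∀ b, child x b ≠ r) (hadj : ∀ x ∈ L, ∀ b, G.Adj x (child x b)) :
    L.ncard < 2 * (gbdry G L).ncard := by
  have hlt := G.card_mul_ncard_sdiff_gbdry_lt hL hr child hinj hne hadj
  have hsub : gbdry G L ⊆ L := fun _ hx => hx.1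
  rw [Nat.card_eq_fintype_card, Fintype.card_bool, Set.ncard_sdiff hsub (hL.subset hsub)] at hlt
  have := Set.ncard_le_ncard hsub hL
  omega

end SimpleGraph

/-- Vertex `i` carries the heap label `i + 1`; the parent of label `m` is `m / 2`. -/
def heapTree (n : ℕ) : SimpleGraph (Fin n) where
  Adj x y := x.val + 1 = (y.val + 1) / 2 ∨ y.val + 1 = (x.val + 1) / 2
  symm := ⟨fun _ _ h => h.symm⟩
  loopless := ⟨fun _ h => by rcases h with h | h <;> omega⟩

namespace heapTree

variable {n : ℕ}

/-- The child of `x` with heap label `2 (x + 1) + b`; junk value `x` if that label exceeds `n`. -/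
def child (x : Fin n) (b : Bool) : Fin n :=
  if h : 2 * x.val + 1 + b.toNat < n then ⟨2 * x.val + 1 + b.toNat, h⟩ else x

theorem child_val {x : Fin n} {b : Bool} (h : 2 * x.val + 1 + b.toNat < n) :
    (child x b).val = 2 * x.val + 1 + b.toNat := by
  simp [child, h]

theorem child_val_of_lt {x : Fin n} (hx : 2 * x.val + 2 < n) (b : Bool) :
    (child x b).val = 2 * x.val + 1 + b.toNat :=
  child_val (by have := Bool.toNat_le b; omega)

theorem child_ne_zero (hn : 0 < n) {x : Fin n} (hx : 2 * x.val + 2 < n) (b : Bool) :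
    child x b ≠ ⟨0, hn⟩ := fun h => by
  have := child_val_of_lt hx b
  simp only [h] at this
  omega

theorem adj_child {x : Fin n} (hx : 2 * x.val + 2 < n) (b : Bool) :
    (heapTree n).Adj x (child x b) := by
  have := child_val_of_lt hx b
  have := Bool.toNat_le b
  left
  omega

theorem injOn_child :
    Set.InjOn (Function.uncurry (@child n)) ({x | 2 * x.val + 2 < n} ×ˢ Set.univ) := by
  rintro ⟨x, b⟩ ⟨hx, -⟩ ⟨y, c⟩ ⟨hy, -⟩ hxy
  have hval : (child x b).val = (child y c).val := congrArg Fin.val hxy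
  rw [child_val_of_lt hx, child_val_of_lt hy] at hval
  have := Bool.toNat_le b
  have := Bool.toNat_le c
  have hbc : b.toNat = c.toNat := by omega
  exact Prod.ext (Fin.ext (by omega)) (by cases b <;> cases c <;> simp_all)

theorem neighborSet_subset (v : Fin n) :
    (heapTree n).neighborSet v ⊆
      {⟨(v.val + 1) / 2 - 1, by omega⟩, child v false, child v true} := by
  rintro y (h | h)
  · have hy := y.isLt
    obtain hb | hb : y.val = 2 * v.val + 1 + (false).toNat ∨
        y.val = 2 * v.val + 1 + (true).toNat := by
      simp only [Bool.toNat_false, Bool.toNat_true]; omega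
    · exact Or.inr (Or.inl (Fin.ext ((child_val (hb ▸ hy)).trans hb.symm).symm))
    · exact Or.inr (Or.inr (Fin.ext ((child_val (hb ▸ hy)).trans hb.symm).symm))
  · exact Or.inl (Fin.ext (by simp only; omega))

theorem ncard_neighborSet_le_three (v : Fin n) : ((heapTree n).neighborSet v).ncard ≤ 3 :=
  (Set.ncard_le_ncard (neighborSet_subset v)).trans <| (Set.ncard_insert_le _ _).trans <|
    Nat.succ_le_succ <| (Set.ncard_insert_le _ _).trans (by rw [Set.ncard_singleton])

theorem reachable_zero (hn : 0 < n) : ∀ v : Fin n, (heapTree n).Reachable v ⟨0, hn⟩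
  | ⟨0, _⟩ => .rfl
  | ⟨k + 1, hk⟩ =>
    have hadj : (heapTree n).Adj ⟨k + 1, hk⟩ ⟨(k + 2) / 2 - 1, by omega⟩ :=
      Or.inr (by simp only; omega)
    hadj.reachable.trans (reachable_zero hn _)
termination_by v => v.val
decreasing_by omega

theorem connected (hn : 0 < n) : (heapTree n).Connected :=
  (connected_iff _).2
    ⟨fun u v => (reachable_zero hn u).trans (reachable_zero hn v).symm, ⟨⟨0, hn⟩⟩⟩

/-- The descendants of `x` are the vertices whose heap label has the binary expansion of `x + 1` as
a prefix. -/
theorem exists_div_pow_eq_of_adj {x px a b : Fin n} (hx : px.val + 1 = (x.val + 1) / 2)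
    (hab : ((heapTree n).deleteEdges {s(x, px)}).Adj a b)
    (ha : ∃ k, (a.val + 1) / 2 ^ k = x.val + 1) : ∃ k, (b.val + 1) / 2 ^ k = x.val + 1 := by
  rw [deleteEdges_adj, Set.mem_singleton_iff] at hab
  obtain ⟨hab | hab, hne⟩ := hab
  · obtain ⟨k, hk⟩ := ha
    exact ⟨k + 1, by rw [pow_succ', ← Nat.div_div_eq_div_mul, ← hab, hk]⟩
  · obtain ⟨_ | k, hk⟩ := ha
    · simp only [pow_zero, Nat.div_one] at hk
      have hax : a = x := Fin.ext (by omega)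
      have hbpx : b = px := Fin.ext (by omega)
      exact absurd (by rw [hax, hbpx]) hne
    · exact ⟨k, by rw [hab, Nat.div_div_eq_div_mul, ← pow_succ', hk]⟩

theorem isBridge_parent {x px : Fin n} (hx : px.val + 1 = (x.val + 1) / 2) :
    (heapTree n).IsBridge s(x, px) := by
  rw [isBridge_iff]
  rintro ⟨w⟩
  have descend : ∀ {u v}, ((heapTree n).deleteEdges {s(x, px)}).Walk u v →
      (∃ k, (u.val + 1) / 2 ^ k = x.val + 1) → ∃ k, (v.val + 1) / 2 ^ k = x.val + 1 := by
    intro u v w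
    induction w with
    | nil => exact id
    | cons h _ ih => exact fun hu => ih (exists_div_pow_eq_of_adj hx h hu)
  obtain ⟨k, hk⟩ := descend w ⟨0, by simp⟩
  have := Nat.div_le_self (px.val + 1) (2 ^ k)
  omega

theorem isAcyclic : (heapTree n).IsAcyclic := by
  refine isAcyclic_iff_forall_adj_isBridge.2 fun v w h => ?_
  rcases h with h | h
  · exact Sym2.eq_swap ▸ isBridge_parent h
  · exact isBridge_parent h

theorem isTree (hn : 0 < n) : (heapTree n).IsTree :=
  ⟨connected hn, isAcyclic⟩

theorem log_le_log_add_one_of_adj {a b : Fin n} (h : (heapTree n).Adj a b) :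
    Nat.log 2 (b.val + 1) ≤ Nat.log 2 (a.val + 1) + 1 := by
  rcases h with h | h
  · have := Nat.log_div_base 2 (b.val + 1)
    rw [← h] at this
    omega
  · exact (Nat.log_mono_right (by omega)).trans (Nat.le_succ _)

theorem log_le_log_add_length {a b : Fin n} (w : (heapTree n).Walk a b) :
    Nat.log 2 (b.val + 1) ≤ Nat.log 2 (a.val + 1) + w.length := by
  induction w with
  | nil => simp
  | cons h _ ih =>
    have := log_le_log_add_one_of_adj h
    rw [Walk.length_cons]
    omega

theorem lt_two_pow_of_dist_le (hn : 0 < n) {v : Fin n} {K : ℕ}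
    (hv : (heapTree n).dist ⟨0, hn⟩ v ≤ K) : v.val + 1 < 2 ^ (K + 1) := by
  obtain ⟨w, hw⟩ := (connected hn).exists_walk_length_eq_dist ⟨0, hn⟩ v
  have := log_le_log_add_length w
  simp only [zero_add, Nat.log_one_right] at this
  calc v.val + 1 < 2 ^ (Nat.log 2 (v.val + 1) + 1) := Nat.lt_pow_succ_log_self one_lt_two _
    _ ≤ 2 ^ (K + 1) := Nat.pow_le_pow_right two_pos (by omega)

end heapTree

/-- The class of finite trees with vertex degree bound `3` is not almost
finite: there is `ε > 0` such that for every `K` some finite tree of degree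
bound `3` admits no partition into parts of diameter at most `K` all of whose
parts have isoperimetric constant at most `ε`. -/
theorem finite_trees_not_almost_finite :
    ∃ ε : ℝ, 0 < ε ∧ ∀ K : ℕ, ∃ n : ℕ, ∃ T : SimpleGraph (Fin n),
      T.IsTree ∧
      (∀ v, (T.neighborSet v).ncard ≤ 3) ∧
      ∀ P : Fin n → Set (Fin n),
        (∀ x, x ∈ P x) →
        (∀ x y, y ∈ P x → P y = P x) →
        (∀ x, ∀ y ∈ P x, ∀ z ∈ P x, T.dist y z ≤ K) →
        ∃ x, ε * ((P x).ncard : ℝ) < ((gbdry T (P x)).ncard : ℝ) := by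
  refine ⟨1 / 2, one_half_pos, fun K => ⟨2 ^ (K + 2) - 1, heapTree _, ?_⟩⟩
  have hpow : 2 ^ (K + 2) = 2 * 2 ^ (K + 1) := pow_succ' 2 (K + 1)
  have hn : 0 < 2 ^ (K + 2) - 1 := by have := Nat.one_le_two_pow (n := K + 1); omega
  refine ⟨heapTree.isTree hn, heapTree.ncard_neighborSet_le_three,
    fun P hself _ hdiam => ⟨⟨0, hn⟩, ?_⟩⟩
  set L := P ⟨0, hn⟩
  have hchildren : ∀ v ∈ L, 2 * v.val + 2 < 2 ^ (K + 2) - 1 := fun v hv => by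
    have := heapTree.lt_two_pow_of_dist_le hn (hdiam _ _ (hself _) v hv)
    omega
  have hlt := (heapTree _).ncard_lt_two_mul_ncard_gbdry L.toFinite (hself _) heapTree.child
    (heapTree.injOn_child.mono (Set.prod_mono hchildren le_rfl))
    (fun v hv => heapTree.child_ne_zero hn (hchildren v hv))
    (fun v hv => heapTree.adj_child (hchildren v hv))
  have : (L.ncard : ℝ) < 2 * (gbdry (heapTree _) L).ncard := by exact_mod_cast hlt
  linarith
end

section
/- The class of finite trees with vertex degree bound d is hyperfinite: for every ε > 0 there exists K such that from any finite tree T with degrees ≤ d one can remove at most ε|V(T)| edges so that every component of the resulting forest has at most K vertices. -/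
/-!
Root the tree at `r` and call `dist r v` the level of `v`. Sorting the edges by the residue mod
`L ≈ 1/ε` of the level of their upper endpoint, some class has at most `|V|/L` edges; deleting it
confines every remaining component to a band of fewer than `L` consecutive levels. Along a path
in a rooted tree the levels first decrease and then increase, so such a component has diameter at
most `2L`, and by the degree bound at most `(d + 1)^(2L)` vertices.
-/

open SimpleGraph Finset

theorem Nat.add_one_add_sub_div_eq {a j L : ℕ} (hj : j < L) (h : (a + 1) % L ≠ j) :
    (a + 1 + (L - j)) / L = (a + (L - j)) / L := by
  rw [add_right_comm, Nat.succ_div, if_neg, add_zero]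
  intro hdvd
  have hL : j + (L - j) ≡ 0 [MOD L] :=
    Nat.modEq_zero_iff_dvd.2 (by rw [Nat.add_sub_cancel' hj.le])
  have hmod : a + 1 ≡ j [MOD L] :=
    Nat.ModEq.add_right_cancel' (L - j)
      ((Nat.modEq_zero_iff_dvd.2 (by rwa [add_right_comm])).trans hL.symm)
  exact h ((show (a + 1) % L = j % L from hmod).trans (Nat.mod_eq_of_lt hj))

theorem Nat.lt_add_of_add_div_eq {a b c L : ℕ} (hL : 0 < L) (h : (a + c) / L = (b + c) / L) :
    a < b + L := by
  have ha := Nat.lt_mul_div_succ (a + c) hL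
  have hb := Nat.mul_div_le (b + c) L
  rw [h, Nat.mul_succ] at ha
  omega

theorem exists_valley {s : ℕ → ℕ} {k : ℕ}
    (hstep : ∀ j < k, s (j + 1) = s j + 1 ∨ s j = s (j + 1) + 1)
    (hnoPeak : ∀ j, j + 2 ≤ k → s (j + 1) = s j + 1 → s (j + 2) = s (j + 1) + 1) :
    ∃ t ≤ k, (∀ j ≤ t, s j = s t + (t - j)) ∧ ∀ j, t ≤ j → j ≤ k → s j = s t + (j - t) := by
  induction k with
  | zero => exact ⟨0, le_rfl, fun j hj => by simp [Nat.le_zero.1 hj], fun j _ hj => by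
      simp [Nat.le_zero.1 hj]⟩
  | succ k ih =>
    obtain ⟨t, htk, hdown, hup⟩ := ih (fun j hj => hstep j (by omega))
      (fun j hj => hnoPeak j (by omega))
    rcases hstep k (by omega) with hk | hk
    · refine ⟨t, by omega, hdown, fun j htj hj => ?_⟩
      rcases Nat.lt_or_ge j (k + 1) with hj' | hj'
      · exact hup j htj (by omega)
      · obtain rfl : j = k + 1 := by omega
        have := hup k htk le_rfl
        omega
    · -- a descent right after an ascent would be a peak, so the valley is at `k`
      obtain rfl : t = k := by
        by_contra hne
        have h1 := hup (k - 1) (by omega) (by omega)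
        have h2 := hup k htk le_rfl
        have := hnoPeak (k - 1) (by omega) (by rw [Nat.sub_add_cancel (by omega)]; omega)
        rw [show k - 1 + 2 = k + 1 by omega, Nat.sub_add_cancel (by omega)] at this
        omega
      refine ⟨t + 1, le_rfl, fun j hj => ?_, fun j hj hj' => by
        obtain rfl : j = t + 1 := by omega
        simp⟩
      rcases Nat.lt_or_ge j (t + 1) with hj' | hj'
      · have := hdown j (by omega)
        omega
      · obtain rfl : j = t + 1 := by omega
        simp

theorem Finset.exists_mul_card_filter_mod_eq_le {α : Type*} (s : Finset α) (f : α → ℕ) {L : ℕ}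
    (hL : 0 < L) : ∃ j < L, L * #{x ∈ s | f x % L = j} ≤ #s := by
  have hsum : #s = ∑ j ∈ range L, #{x ∈ s | f x % L = j} :=
    card_eq_sum_card_fiberwise fun x _ => mem_range.2 (Nat.mod_lt _ hL)
  obtain ⟨j, hj, hle⟩ := exists_le_of_sum_le (nonempty_range_iff.2 hL.ne')
    (f := fun j => L * #{x ∈ s | f x % L = j}) (g := fun _ => #s)
    (by rw [← mul_sum, ← hsum, sum_const, card_range, smul_eq_mul])
  exact ⟨j, mem_range.1 hj, hle⟩

namespace SimpleGraph

variable {V : Type*} {G : SimpleGraph V}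

theorem IsTree.eq_of_adj_of_dist_add_one_eq (hT : G.IsTree) (r : V) {u x y : V}
    (hx : G.Adj u x) (hy : G.Adj u y) (hdx : G.dist r x + 1 = G.dist r u)
    (hdy : G.dist r y + 1 = G.dist r u) : x = y := by
  classical
  obtain ⟨p, hp, -⟩ := hT.connected.exists_path_of_dist r u
  have hparent : ∀ z, G.Adj u z → G.dist r z + 1 = G.dist r u → z = p.penultimate := by
    intro z hz hdz
    obtain ⟨q, hq, hql⟩ := hT.connected.exists_path_of_dist r z
    have hu : u ∉ q.support := fun hu => by
      have := (dist_le (q.takeUntil u hu)).trans (q.length_takeUntil_le_length hu)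
      omega
    exact hT.isAcyclic.eq_penultimate_of_adj_end hp hz
      (hT.isAcyclic.mem_support_of_ne_mem_support_of_adj_of_isPath hp hq hz hu)
  rw [hparent x hx hdx, hparent y hy hdy]

theorem IsTree.exists_valley_of_isPath (hT : G.IsTree) (r : V) {u w : V} {p : G.Walk u w}
    (hp : p.IsPath) : ∃ t ≤ p.length, G.dist r u = G.dist r (p.getVert t) + t ∧
      G.dist r w = G.dist r (p.getVert t) + (p.length - t) := by
  have hstep : ∀ j < p.length, G.dist r (p.getVert (j + 1)) = G.dist r (p.getVert j) + 1 ∨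
      G.dist r (p.getVert j) = G.dist r (p.getVert (j + 1)) + 1 := fun j hj =>
    (hT.dist_eq_dist_add_one_of_adj r (p.adj_getVert_succ hj)).symm
  obtain ⟨t, ht, hdown, hup⟩ :=
    exists_valley (s := fun j => G.dist r (p.getVert j)) hstep fun j hj hjup => by
      rcases hstep (j + 1) (by omega) with h | h
      · exact h
      · have hpeak := hT.eq_of_adj_of_dist_add_one_eq r (p.adj_getVert_succ (by omega)).symm
          (p.adj_getVert_succ (by omega)) hjup.symm h.symm
        exact absurd (hp.getVert_injOn (Set.mem_ofPred.2 (by omega))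
          (Set.mem_ofPred.2 (by omega)) hpeak) (by omega)
  refine ⟨t, ht, ?_, ?_⟩
  · simpa using hdown 0 (Nat.zero_le t)
  · simpa using hup p.length ht le_rfl

theorem Reachable.apply_eq_of_forall_adj {α : Type*} {f : V → α}
    (hf : ∀ ⦃a b⦄, G.Adj a b → f a = f b) {u v : V} (h : G.Reachable u v) : f u = f v := by
  obtain ⟨p⟩ := h
  induction p with
  | nil => rfl
  | cons hadj _ ih => exact (hf hadj).trans ih

theorem IsTree.dist_le_of_reachable {H : SimpleGraph V} (hT : G.IsTree) (hHG : H ≤ G) (r : V)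
    {L : ℕ} (hspread : ∀ a b, H.Reachable a b → G.dist r a ≤ G.dist r b + L) {v w : V}
    (hvw : H.Reachable v w) : G.dist v w ≤ 2 * L := by
  obtain ⟨p, hp⟩ := hvw.exists_isPath
  obtain ⟨t, ht, hv, hw⟩ := hT.exists_valley_of_isPath r (hp.mapLe hHG)
  simp only [Walk.getVert_map, Hom.coe_ofLE, id, Walk.length_mapLe] at ht hv hw
  have hvt := hspread _ _ ⟨p.take t⟩
  have hwt := hspread _ _ ⟨(p.drop t).reverse⟩
  calc G.dist v w ≤ (p.mapLe hHG).length := dist_le _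
    _ = p.length := Walk.length_mapLe _ _
    _ ≤ 2 * L := by omega

theorem Connected.ncard_setOf_dist_le_le [Finite V] (hG : G.Connected) {d : ℕ}
    (hdeg : ∀ v, (G.neighborSet v).ncard ≤ d) (v : V) (R : ℕ) :
    {w | G.dist v w ≤ R}.ncard ≤ (d + 1) ^ R := by
  induction R with
  | zero => simp [hG.dist_eq_zero_iff]
  | succ R ih =>
    set B := (Set.toFinite {w | G.dist v w ≤ R}).toFinset
    have hcover : {w | G.dist v w ≤ R + 1} ⊆ ⋃ u ∈ B, insert u (G.neighborSet u) := by
      intro w (hw : G.dist v w ≤ R + 1)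
      obtain ⟨p, hp⟩ := hG.exists_walk_length_eq_dist v w
      have hR : G.dist v (p.getVert R) ≤ R :=
        (dist_le (p.take R)).trans (by rw [Walk.take_length]; exact min_le_left _ _)
      simp only [Set.mem_iUnion, exists_prop]
      refine ⟨p.getVert R, (Set.Finite.mem_toFinset _).2 hR, ?_⟩
      rcases Nat.lt_or_ge R p.length with hlt | hge
      · have := p.adj_getVert_succ hlt
        rw [show R + 1 = p.length by omega, Walk.getVert_length] at this
        exact Set.mem_insert_of_mem _ this
      · rw [p.getVert_of_length_le hge]
        exact Set.mem_insert _ _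
    calc {w | G.dist v w ≤ R + 1}.ncard
        ≤ (⋃ u ∈ B, insert u (G.neighborSet u)).ncard := Set.ncard_le_ncard hcover
      _ ≤ ∑ u ∈ B, (insert u (G.neighborSet u)).ncard := B.set_ncard_biUnion_le _
      _ ≤ ∑ _u ∈ B, (d + 1) := sum_le_sum fun u _ =>
          (Set.ncard_insert_le _ _).trans (Nat.add_le_add_right (hdeg u) 1)
      _ = {w | G.dist v w ≤ R}.ncard * (d + 1) := by
          rw [sum_const, smul_eq_mul, ← Set.ncard_eq_toFinset_card]
      _ ≤ (d + 1) ^ (R + 1) := by rw [pow_succ]; gcongr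

theorem IsTree.exists_sparse_deleteEdges_dist_le [Fintype V] (hT : G.IsTree) {L : ℕ}
    (hL : 0 < L) : ∃ S ⊆ G.edgeSet, L * S.ncard ≤ Fintype.card V ∧
      ∀ v w, (G.deleteEdges S).Reachable v w → G.dist v w ≤ 2 * L := by
  classical
  obtain ⟨r⟩ := hT.connected.nonempty
  -- the class of an edge between the levels `a` and `a + 1` is `(a + 1) % L`
  obtain ⟨j, hj, hS⟩ :=
    G.edgeFinset.exists_mul_card_filter_mod_eq_le (fun e => (e.map (G.dist r)).sup) hL
  set S := {e ∈ G.edgeFinset | (e.map (G.dist r)).sup % L = j}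
  have hband : ∀ ⦃a b⦄, (G.deleteEdges S).Adj a b →
      (G.dist r a + (L - j)) / L = (G.dist r b + (L - j)) / L := by
    intro a b hab
    rw [deleteEdges_adj] at hab
    have hcut : max (G.dist r a) (G.dist r b) % L ≠ j := fun h =>
      hab.2 (mem_filter.2 ⟨mem_edgeFinset.2 hab.1, h⟩)
    rcases hT.dist_eq_dist_add_one_of_adj r hab.1 with h | h
    · rw [h, max_eq_left (by omega)] at hcut
      rw [h]
      exact Nat.add_one_add_sub_div_eq hj hcut
    · rw [h, max_eq_right (by omega)] at hcut
      rw [h]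
      exact (Nat.add_one_add_sub_div_eq hj hcut).symm
  refine ⟨S, fun e he => mem_edgeFinset.1 (mem_filter.1 he).1, ?_, fun v w => ?_⟩
  · have := hT.card_edgeFinset
    rw [Set.ncard_coe_finset]
    omega
  · exact hT.dist_le_of_reachable (G.deleteEdges_le _) r fun a b hab =>
      (Nat.lt_add_of_add_div_eq hL (hab.apply_eq_of_forall_adj hband)).le

end SimpleGraph

/-- The class of finite trees with vertex degree bound `d` is hyperfinite:
for every `ε > 0` there is `K` such that from any finite tree one can delete
at most `ε|V|` edges leaving all components of size at most `K`. -/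
theorem finite_trees_hyperfinite (d : ℕ) :
    ∀ ε : ℝ, 0 < ε → ∃ K : ℕ, ∀ n (T : SimpleGraph (Fin n)),
      T.IsTree → (∀ v, (T.neighborSet v).ncard ≤ d) →
      ∃ T' : SimpleGraph (Fin n), T' ≤ T ∧
        ((T.edgeSet \ T'.edgeSet).ncard : ℝ) ≤ ε * (n : ℝ) ∧
        (∀ v : Fin n, {w | T'.Reachable v w}.ncard ≤ K) := by
  intro ε hε
  set L := ⌈1 / ε⌉₊
  have hεL : 1 ≤ ε * L := by
    have := Nat.le_ceil (1 / ε)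
    rwa [div_le_iff₀ hε, mul_comm] at this
  have hL : 0 < L := Nat.ceil_pos.2 (by positivity)
  refine ⟨(d + 1) ^ (2 * L), fun n T hT hdeg => ?_⟩
  obtain ⟨S, hSE, hScard, hS⟩ := hT.exists_sparse_deleteEdges_dist_le hL
  refine ⟨T.deleteEdges S, T.deleteEdges_le S, ?_, fun v => ?_⟩
  · rw [edgeSet_deleteEdges, Set.sdiff_sdiff_cancel_left hSE]
    have hScard' : (L : ℝ) * S.ncard ≤ n := by exact_mod_cast Fintype.card_fin n ▸ hScard
    calc (S.ncard : ℝ) ≤ ε * L * S.ncard := le_mul_of_one_le_left (by positivity) hεL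
      _ = ε * (L * S.ncard) := mul_assoc _ _ _
      _ ≤ ε * n := by gcongr
  · calc {w | (T.deleteEdges S).Reachable v w}.ncard
        ≤ {w | T.dist v w ≤ 2 * L}.ncard := Set.ncard_le_ncard fun w => hS v w
      _ ≤ (d + 1) ^ (2 * L) := hT.connected.ncard_setOf_dist_le_le hdeg v _
end

section
/- The class of finite graphs of degree bound d that are D-doubling is hyperfinite: for every ε > 0 there exists K (depending only on ε, d, D) such that any finite D-doubling graph G of degree bound d admits deletion of at most ε|V(G)| edges leaving all components of size at most K. -/
/-- The ball of radius `r` around `x` in the graph `G`. -/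
def gball {V : Type*} (G : SimpleGraph V) (x : V) (r : ℕ) : Set V :=
  {y | G.Reachable x y ∧ G.dist x y ≤ r}

/-!
Carve the graph greedily. Among the vertices not yet covered, grow a ball around one of them
inside the uncovered vertices until its outer boundary has at most a `1/m` fraction of its size,
take the ball as a piece and cut the at most `d/m · |ball|` edges leaving it. Such a radius
`r < 2 ^ t` exists: otherwise the ball of radius `2 ^ t` would have `(1 + 1/m) ^ 2 ^ t` vertices,
whereas doubling bounds it by `(d + 1) * D ^ t`, which is only polynomial in the radius `2 ^ t`.
The pieces then have at most `(d + 1) * D ^ t` vertices, and at most `d n / m ≤ ε n` edges are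
cut in total.
-/

open Finset
open scoped Classical

theorem exists_pow_two_pow_mul_lt (C D m : ℕ) (hm : 0 < m) :
    ∃ t, m ^ 2 ^ t * (C * D ^ t) < (m + 1) ^ 2 ^ t := by
  set a : ℝ := (m + 1) / m
  have ha : 1 < a := by rw [lt_div_iff₀ (by positivity)]; linarith
  have hlim := (tendsto_pow_const_div_const_pow_of_one_lt D ha).comp
    (tendsto_pow_atTop_atTop_of_one_lt (α := ℕ) one_lt_two)
  obtain ⟨t, ht⟩ := (hlim.eventually_lt_const (by positivity : (0 : ℝ) < 1 / (C + 1))).exists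
  simp only [Function.comp_apply, Nat.cast_pow, Nat.cast_ofNat] at ht
  -- `D ^ t ≤ (2 ^ t) ^ D`, so it suffices that `a ^ N` beats `N ^ D` at `N = 2 ^ t`
  have hDt : (D : ℝ) ^ t ≤ ((2 : ℝ) ^ t) ^ D := by
    rw [← pow_mul, mul_comm, pow_mul]
    exact pow_le_pow_left₀ (Nat.cast_nonneg D) (by exact_mod_cast Nat.lt_two_pow_self.le) t
  have hpos : (0 : ℝ) < a ^ 2 ^ t := by positivity
  rw [div_lt_div_iff₀ hpos (by positivity), one_mul] at ht
  have hlt : (C : ℝ) * D ^ t < a ^ 2 ^ t := by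
    nlinarith [pow_nonneg (Nat.cast_nonneg (α := ℝ) D) t]
  rw [div_pow, lt_div_iff₀ (by positivity)] at hlt
  exact ⟨t, by exact_mod_cast (by linarith : (m : ℝ) ^ 2 ^ t * (C * D ^ t) < (m + 1) ^ 2 ^ t)⟩

theorem exists_lt_mul_le_mul_of_pow_mul_lt {f : ℕ → ℕ} {m N B : ℕ} (hf0 : 1 ≤ f 0)
    (hfN : f N ≤ B) (h : m ^ N * B < (m + 1) ^ N) :
    ∃ r < N, m * f (r + 1) ≤ (m + 1) * f r := by
  by_contra! hgrow
  have grows : ∀ r ≤ N, (m + 1) ^ r ≤ m ^ r * f r := by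
    intro r hr
    induction r with
    | zero => simpa using hf0
    | succ r ih =>
      calc (m + 1) ^ (r + 1) ≤ m ^ r * f r * (m + 1) :=
            Nat.mul_le_mul_right _ (ih (by omega))
        _ = m ^ r * ((m + 1) * f r) := by ring
        _ ≤ m ^ r * (m * f (r + 1)) := Nat.mul_le_mul_left _ (hgrow r (by omega)).le
        _ = m ^ (r + 1) * f (r + 1) := by ring
  have := (grows N le_rfl).trans (Nat.mul_le_mul_left _ hfN)
  omega

noncomputable section

namespace SimpleGraph

variable {V : Type*} (G : SimpleGraph V)

theorem gball_mono (x : V) {r s : ℕ} (h : r ≤ s) : gball G x r ⊆ gball G x s :=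
  fun _ hy => ⟨hy.1, hy.2.trans h⟩

theorem gball_one_subset (x : V) : gball G x 1 ⊆ insert x (G.neighborSet x) := by
  rintro y ⟨hxy, hdist⟩
  rcases Nat.le_one_iff_eq_zero_or_eq_one.1 hdist with h | h
  · exact .inl (hxy.dist_eq_zero_iff.1 h).symm
  · exact .inr (dist_eq_one_iff_adj.1 h)

theorem ncard_gball_two_pow_le [Finite V] {d D : ℕ} (hd : ∀ v, (G.neighborSet v).ncard ≤ d)
    (hD : ∀ x s, 1 ≤ s → (gball G x (2 * s)).ncard ≤ D * (gball G x s).ncard)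
    (x : V) (t : ℕ) : (gball G x (2 ^ t)).ncard ≤ (d + 1) * D ^ t := by
  induction t with
  | zero =>
    calc (gball G x (2 ^ 0)).ncard ≤ (insert x (G.neighborSet x)).ncard :=
          Set.ncard_le_ncard (G.gball_one_subset x)
      _ ≤ (G.neighborSet x).ncard + 1 := Set.ncard_insert_le _ _
      _ ≤ (d + 1) * D ^ 0 := by simpa using hd x
  | succ t ih =>
    calc (gball G x (2 ^ (t + 1))).ncard ≤ D * (gball G x (2 ^ t)).ncard := by
          rw [pow_succ']; exact hD x _ Nat.one_le_two_pow
      _ ≤ D * ((d + 1) * D ^ t) := Nat.mul_le_mul_left _ ih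
      _ = (d + 1) * D ^ (t + 1) := by ring

def boundaryIn (R P : Finset V) : Finset V :=
  (R \ P).filter fun y => ∃ z ∈ P, G.Adj z y

def ballIn (R : Finset V) (x : V) : ℕ → Finset V
  | 0 => {x}
  | r + 1 => ballIn R x r ∪ G.boundaryIn R (ballIn R x r)

variable {G}

theorem card_ballIn_succ (R : Finset V) (x : V) (r : ℕ) :
    #(G.ballIn R x (r + 1)) = #(G.ballIn R x r) + #(G.boundaryIn R (G.ballIn R x r)) :=
  card_union_of_disjoint <| disjoint_sdiff.mono_right (filter_subset _ _)

theorem ballIn_subset {R : Finset V} {x : V} (hx : x ∈ R) (r : ℕ) : G.ballIn R x r ⊆ R := by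
  induction r with
  | zero => simpa [ballIn] using hx
  | succ r ih => exact union_subset ih ((filter_subset _ _).trans sdiff_subset)

theorem mem_ballIn_self (R : Finset V) (x : V) (r : ℕ) : x ∈ G.ballIn R x r := by
  induction r with
  | zero => simp [ballIn]
  | succ r ih => exact mem_union_left _ ih

theorem coe_ballIn_subset_gball (R : Finset V) (x : V) (r : ℕ) :
    (G.ballIn R x r : Set V) ⊆ gball G x r := by
  induction r with
  | zero => simp [ballIn, gball]
  | succ r ih =>
    intro y hy
    rcases mem_union.1 hy with hy | hy
    · exact G.gball_mono x r.le_succ (ih hy)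
    · obtain ⟨z, hz, hzy⟩ := (mem_filter.1 hy).2
      obtain ⟨hxz, hdist⟩ := ih hz
      obtain ⟨p, hp⟩ := hxz.exists_walk_length_eq_dist
      refine ⟨hxz.trans hzy.reachable, ?_⟩
      calc G.dist x y ≤ (p.concat hzy).length := dist_le _
        _ ≤ r + 1 := by rw [p.length_concat]; omega

theorem exists_subset_card_boundaryIn_le [Finite V] {d D m t : ℕ}
    (hd : ∀ v, (G.neighborSet v).ncard ≤ d)
    (hD : ∀ x s, 1 ≤ s → (gball G x (2 * s)).ncard ≤ D * (gball G x s).ncard)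
    (ht : m ^ 2 ^ t * ((d + 1) * D ^ t) < (m + 1) ^ 2 ^ t) {R : Finset V} (hR : R.Nonempty) :
    ∃ P ⊆ R, P.Nonempty ∧ #P ≤ (d + 1) * D ^ t ∧ m * #(G.boundaryIn R P) ≤ #P := by
  obtain ⟨x, hx⟩ := hR
  have card_ballIn_le {r s : ℕ} (hrs : r ≤ s) : #(G.ballIn R x r) ≤ (gball G x s).ncard := by
    rw [← Set.ncard_coe_finset]
    exact Set.ncard_le_ncard ((coe_ballIn_subset_gball R x r).trans (G.gball_mono x hrs))
  obtain ⟨r, hr, hslow⟩ := exists_lt_mul_le_mul_of_pow_mul_lt (f := fun r => #(G.ballIn R x r))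
    (by simp [ballIn]) ((card_ballIn_le le_rfl).trans (G.ncard_gball_two_pow_le hd hD x t)) ht
  refine ⟨G.ballIn R x r, ballIn_subset hx r, ⟨x, mem_ballIn_self R x r⟩,
    (card_ballIn_le hr.le).trans (G.ncard_gball_two_pow_le hd hD x t), ?_⟩
  rw [card_ballIn_succ] at hslow
  linarith

variable (G) in
def partGraph {R : Finset V} (Q : Finpartition R) : SimpleGraph V where
  Adj a b := G.Adj a b ∧ ∃ p ∈ Q.parts, a ∈ p ∧ b ∈ p
  symm := ⟨fun _ _ h => ⟨h.1.symm, h.2.imp fun _ hp => ⟨hp.1, hp.2.2, hp.2.1⟩⟩⟩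
  loopless := ⟨fun a h => G.loopless.irrefl a h.1⟩

theorem Reachable.mem_part_of_partGraph {R : Finset V} {Q : Finpartition R} {v w : V}
    (h : (G.partGraph Q).Reachable v w) (hv : v ∈ R) : w ∈ Q.part v := by
  obtain ⟨p⟩ := h
  induction p with
  | nil => exact Q.mem_part hv
  | cons hadj _ ih =>
    obtain ⟨-, q, hq, hvq, huq⟩ := hadj
    rw [Q.part_eq_of_mem hq hvq, ← Q.part_eq_of_mem hq huq]
    exact ih (Q.le hq huq)

variable (G)

theorem partGraph_le {R : Finset V} (Q : Finpartition R) : G.partGraph Q ≤ G :=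
  fun _ _ h => h.1

theorem ncard_reachable_partGraph_le {R : Finset V} {Q : Finpartition R} {K : ℕ}
    (hK : ∀ p ∈ Q.parts, #p ≤ K) {v : V} (hv : v ∈ R) :
    {w | (G.partGraph Q).Reachable v w}.ncard ≤ K :=
  calc {w | (G.partGraph Q).Reachable v w}.ncard ≤ (Q.part v : Set V).ncard :=
        Set.ncard_le_ncard fun _ hw => hw.mem_part_of_partGraph hv
    _ ≤ K := by rw [Set.ncard_coe_finset]; exact hK _ (Q.part_mem.2 hv)

variable [Fintype V]

def crossEdges {R : Finset V} (Q : Finpartition R) : Finset (Sym2 V) :=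
  G.edgeFinset.filter fun e => (∀ v ∈ e, v ∈ R) ∧ e ∉ (G.partGraph Q).edgeSet

theorem edgeSet_sdiff_partGraph (Q : Finpartition (univ : Finset V)) :
    G.edgeSet \ (G.partGraph Q).edgeSet = G.crossEdges Q := by
  ext e
  simp [crossEdges]

theorem crossEdges_extend_subset {A P R : Finset V} (Q : Finpartition A) (hP : P ≠ ⊥)
    (hAP : Disjoint A P) (hR : A ⊔ P = R) :
    G.crossEdges (Q.extend hP hAP hR) ⊆
      G.crossEdges Q ∪ (G.boundaryIn R P).biUnion fun b => G.incidenceFinset b := by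
  intro e he
  induction e using Sym2.ind with
  | _ a b =>
  simp only [crossEdges, partGraph, Finpartition.extend_parts, mem_filter, mem_edgeFinset,
    mem_edgeSet, Sym2.forall_mem_pair, mem_insert, exists_eq_or_imp, not_and, not_or] at he
  obtain ⟨hab, ⟨haR, hbR⟩, hcut⟩ := he
  obtain ⟨hPab, hQab⟩ := hcut hab
  have boundary_edge {u w : V} (hu : u ∈ P) (hw : w ∈ R) (hwP : w ∉ P) (huw : G.Adj u w)
      (he : s(a, b) ∈ G.incidenceFinset w) :
      s(a, b) ∈ (G.boundaryIn R P).biUnion fun b => G.incidenceFinset b :=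
    mem_biUnion.2 ⟨w, mem_filter.2 ⟨mem_sdiff.2 ⟨hw, hwP⟩, u, hu, huw⟩, he⟩
  by_cases ha : a ∈ P
  · exact mem_union_right _ <| boundary_edge ha hbR (hPab ha) hab <|
      (mem_incidenceFinset _ _ _).2 ⟨hab, Sym2.mem_mk_right a b⟩
  by_cases hb : b ∈ P
  · exact mem_union_right _ <| boundary_edge hb haR ha hab.symm <|
      (mem_incidenceFinset _ _ _).2 ⟨hab, Sym2.mem_mk_left a b⟩
  have mem_A {u : V} (hu : u ∈ R) (huP : u ∉ P) : u ∈ A :=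
    (mem_union.1 (by rwa [← sup_eq_union, hR])).resolve_right huP
  refine mem_union_left _ (mem_filter.2 ⟨mem_edgeFinset.2 hab, ?_, fun h => hQab h.2⟩)
  exact Sym2.forall_mem_pair.2 ⟨mem_A haR ha, mem_A hbR hb⟩

theorem card_crossEdges_extend_le {d : ℕ} (hd : ∀ v, (G.neighborSet v).ncard ≤ d)
    {A P R : Finset V} (Q : Finpartition A) (hP : P ≠ ⊥) (hAP : Disjoint A P)
    (hR : A ⊔ P = R) :
    #(G.crossEdges (Q.extend hP hAP hR)) ≤ #(G.crossEdges Q) + #(G.boundaryIn R P) * d := by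
  refine (card_le_card (G.crossEdges_extend_subset Q hP hAP hR)).trans <|
    (card_union_le _ _).trans <|
      Nat.add_le_add_left (card_biUnion_le_card_mul _ _ _ fun v _ => ?_) _
  rw [card_incidenceFinset_eq_degree, ← card_neighborSet_eq_degree, ← Nat.card_eq_fintype_card,
    Nat.card_coe_set_eq]
  exact hd v

theorem exists_finpartition_crossEdges_le {d m K : ℕ} (hd : ∀ v, (G.neighborSet v).ncard ≤ d)
    (hcarve : ∀ R : Finset V, R.Nonempty →
      ∃ P ⊆ R, P.Nonempty ∧ #P ≤ K ∧ m * #(G.boundaryIn R P) ≤ #P)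
    (R : Finset V) :
    ∃ Q : Finpartition R, (∀ p ∈ Q.parts, #p ≤ K) ∧ m * #(G.crossEdges Q) ≤ d * #R := by
  induction R using Finset.strongInduction with
  | H R ih =>
  rcases R.eq_empty_or_nonempty with rfl | hR
  · refine ⟨Finpartition.empty _, by simp, ?_⟩
    rw [crossEdges, filter_false_of_mem fun e _ h => by simpa using h.1 _ e.out_fst_mem]
    simp
  obtain ⟨P, hPR, hP, hPK, hPboundary⟩ := hcarve R hR
  obtain ⟨Q, hQK, hQcross⟩ := ih (R \ P) (sdiff_ssubset hPR hP)
  refine ⟨Q.extend hP.ne_empty sdiff_disjoint (sdiff_sup_cancel hPR), ?_,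
    (Nat.mul_le_mul_left m (G.card_crossEdges_extend_le hd Q _ _ _)).trans ?_⟩
  · intro p hp
    rcases mem_insert.1 hp with rfl | hp
    exacts [hPK, hQK p hp]
  calc m * (#(G.crossEdges Q) + #(G.boundaryIn R P) * d)
      = m * #(G.crossEdges Q) + d * (m * #(G.boundaryIn R P)) := by ring
    _ ≤ d * #(R \ P) + d * #P := Nat.add_le_add hQcross (Nat.mul_le_mul_left _ hPboundary)
    _ = d * #R := by rw [← mul_add, card_sdiff_add_card_eq_card hPR]

end SimpleGraph

end

/-- The class of finite `D`-doubling graphs of degree bound `d` is hyperfinite: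
for every `ε > 0` there is `K = K(ε,d,D)` such that from any finite `D`-doubling
graph of degree bound `d` one can delete at most `ε|V|` edges leaving all
components of size at most `K`. -/
theorem doubling_finite_graphs_hyperfinite (d D : ℕ) :
    ∀ ε : ℝ, 0 < ε → ∃ K : ℕ, ∀ n (G : SimpleGraph (Fin n)),
      (∀ v, (G.neighborSet v).ncard ≤ d) →
      (∀ (x : Fin n) (s : ℕ), 1 ≤ s →
        (gball G x (2 * s)).ncard ≤ D * (gball G x s).ncard) →
      ∃ G' : SimpleGraph (Fin n), G' ≤ G ∧
        ((G.edgeSet \ G'.edgeSet).ncard : ℝ) ≤ ε * (n : ℝ) ∧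
        (∀ v : Fin n, {w | G'.Reachable v w}.ncard ≤ K) := by
  intro ε hε
  obtain ⟨m, hm⟩ := exists_nat_gt (d / ε)
  have hdm : (d : ℝ) < ε * m := by rwa [div_lt_iff₀ hε, mul_comm] at hm
  have hm0 : 0 < m := by exact_mod_cast (div_nonneg d.cast_nonneg hε.le).trans_lt hm
  obtain ⟨t, ht⟩ := exists_pow_two_pow_mul_lt (d + 1) D m hm0
  refine ⟨(d + 1) * D ^ t, fun n G hd hD => ?_⟩
  obtain ⟨Q, hQK, hQcross⟩ := G.exists_finpartition_crossEdges_le hd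
    (fun R hR => G.exists_subset_card_boundaryIn_le hd hD ht hR) univ
  refine ⟨G.partGraph Q, G.partGraph_le Q, ?_,
    fun v => G.ncard_reachable_partGraph_le hQK (mem_univ v)⟩
  rw [G.edgeSet_sdiff_partGraph Q, Set.ncard_coe_finset]
  have hcross : (m : ℝ) * #(G.crossEdges Q) ≤ d * n := by exact_mod_cast card_fin n ▸ hQcross
  refine le_of_mul_le_mul_left ?_ (Nat.cast_pos.2 hm0 : (0 : ℝ) < m)
  calc (m : ℝ) * #(G.crossEdges Q) ≤ d * n := hcross
    _ ≤ ε * m * n := by gcongr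
    _ = m * (ε * n) := by ring
end
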